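/- arXiv:2407.14223 — 2 statements merged into one kernel-verified Lean document; each statement's English description precedes it below -/
import Mathlib

section
/- If f : ℝ → ℂ satisfies (1+|x|) f(x) ∈ L²((0,∞)), then the function x ↦ ∫_x^∞ |f(y)| dy belongs to L²((0,∞)), with L² norm bounded by a constant times ‖(1+|·|) f‖_{L²((0,∞))}. -/
/-!
Cauchy–Schwarz against the weight `y ^ (3/4)` gives, for `x > 0`,
`(∫_x^∞ H)² ≤ 2 x^(-1/2) ∫_x^∞ y^(3/2) H(y)² dy`. Integrating in `x` and exchanging the order of
integration, the inner integral becomes `∫_0^y 2 x^(-1/2) dx = 4 y^(1/2)`, so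
`∫_0^∞ (∫_x^∞ H)² dx ≤ 4 ∫_0^∞ y² H(y)² dy`. With `H = ‖f‖` and `y ≤ 1 + |y|` this gives the
theorem with `C = 2`.
-/

open MeasureTheory Set

open scoped ENNReal

theorem ENNReal.sq_lintegral_mul_le {α : Type*} [MeasurableSpace α] {μ : Measure α}
    {f g : α → ℝ≥0∞} (hf : AEMeasurable f μ) (hg : AEMeasurable g μ) :
    (∫⁻ a, f a * g a ∂μ) ^ 2 ≤ (∫⁻ a, f a ^ 2 ∂μ) * ∫⁻ a, g a ^ 2 ∂μ := by
  have hCS := ENNReal.lintegral_mul_le_Lp_mul_Lq μ Real.HolderConjugate.two_two hf hg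
  simp only [ENNReal.rpow_two, Pi.mul_apply] at hCS
  have hsq : ∀ a : ℝ≥0∞, (a ^ (1 / 2 : ℝ)) ^ 2 = a := fun a => by
    rw [← ENNReal.rpow_natCast, ← ENNReal.rpow_mul]; norm_num
  calc (∫⁻ a, f a * g a ∂μ) ^ 2
      ≤ ((∫⁻ a, f a ^ 2 ∂μ) ^ (1 / 2 : ℝ) * (∫⁻ a, g a ^ 2 ∂μ) ^ (1 / 2 : ℝ)) ^ 2 := by gcongr
    _ = (∫⁻ a, f a ^ 2 ∂μ) * ∫⁻ a, g a ^ 2 ∂μ := by rw [mul_pow, hsq, hsq]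

theorem eLpNorm_two_sq {α E : Type*} [MeasurableSpace α] [ENorm E] {μ : Measure α} (f : α → E) :
    eLpNorm f 2 μ ^ 2 = ∫⁻ x, ‖f x‖ₑ ^ 2 ∂μ := by
  simpa using eLpNorm_nnreal_pow_eq_lintegral (μ := μ) (f := f) (p := 2) two_ne_zero

theorem lintegral_Ioi_ofReal_rpow {r x : ℝ} (hr : r < -1) (hx : 0 < x) :
    ∫⁻ y in Ioi x, ENNReal.ofReal (y ^ r) = ENNReal.ofReal (-x ^ (r + 1) / (r + 1)) := by
  rw [← ofReal_integral_eq_lintegral_ofReal (integrableOn_Ioi_rpow_of_lt hr hx)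
    (ae_restrict_of_forall_mem measurableSet_Ioi fun y hy => Real.rpow_nonneg (hx.trans hy).le _),
    integral_Ioi_rpow_of_lt hr hx]

theorem lintegral_Ioo_ofReal_rpow {r x : ℝ} (hr : -1 < r) (hx : 0 ≤ x) :
    ∫⁻ y in Ioo 0 x, ENNReal.ofReal (y ^ r) = ENNReal.ofReal (x ^ (r + 1) / (r + 1)) := by
  have hint : IntegrableOn (fun y : ℝ => y ^ r) (Ioc 0 x) :=
    (intervalIntegral.intervalIntegrable_rpow' hr).1
  rw [← ofReal_integral_eq_lintegral_ofReal (hint.mono_set Ioo_subset_Ioc_self)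
    (ae_restrict_of_forall_mem measurableSet_Ioo fun y hy => Real.rpow_nonneg hy.1.le _),
    ← integral_Ioc_eq_integral_Ioo, ← intervalIntegral.integral_of_le hx,
    integral_rpow (Or.inl hr), Real.zero_rpow (by linarith), sub_zero]

theorem lintegral_mul_lintegral_Ioi_comm (μ : Measure ℝ) [SFinite μ] {c F : ℝ → ℝ≥0∞}
    (hc : Measurable c) (hF : Measurable F) :
    ∫⁻ x, c x * ∫⁻ y in Ioi x, F y ∂μ ∂μ = ∫⁻ y, F y * ∫⁻ x in Iio y, c x ∂μ ∂μ := by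
  let Φ : ℝ → ℝ → ℝ≥0∞ := fun x y => if x < y then c x * F y else 0
  have hΦ : Measurable (Function.uncurry Φ) :=
    Measurable.ite (measurableSet_lt measurable_fst measurable_snd)
      ((hc.comp measurable_fst).mul (hF.comp measurable_snd)) measurable_const
  calc ∫⁻ x, c x * ∫⁻ y in Ioi x, F y ∂μ ∂μ = ∫⁻ x, ∫⁻ y, Φ x y ∂μ ∂μ := by
        refine lintegral_congr fun x => ?_
        rw [← lintegral_const_mul _ hF, ← lintegral_indicator measurableSet_Ioi]
        simp only [Φ, indicator_apply, mem_Ioi]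
    _ = ∫⁻ y, ∫⁻ x, Φ x y ∂μ ∂μ := lintegral_lintegral_swap hΦ.aemeasurable
    _ = ∫⁻ y, F y * ∫⁻ x in Iio y, c x ∂μ ∂μ := by
        refine lintegral_congr fun y => ?_
        rw [← lintegral_const_mul _ hc, ← lintegral_indicator measurableSet_Iio]
        simp only [Φ, indicator_apply, mem_Iio, mul_comm (F y)]

theorem sq_lintegral_Ioi_le {H : ℝ → ℝ≥0∞} (hH : Measurable H) {x : ℝ} (hx : 0 < x) :
    (∫⁻ y in Ioi x, H y) ^ 2 ≤
      2 * ENNReal.ofReal (x ^ (-(1 : ℝ) / 2)) *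
        ∫⁻ y in Ioi x, ENNReal.ofReal (y ^ ((3 : ℝ) / 2)) * H y ^ 2 := by
  have hsplit : ∀ y ∈ Ioi x,
      H y = ENNReal.ofReal (y ^ ((3 : ℝ) / 4)) * H y * ENNReal.ofReal (y ^ (-(3 : ℝ) / 4)) := by
    intro y hy
    rw [mul_right_comm, ← ENNReal.ofReal_mul (Real.rpow_nonneg (hx.trans hy).le _),
      ← Real.rpow_add (hx.trans hy)]
    norm_num
  have hsq : ∀ y ∈ Ioi x, ∀ r : ℝ, ENNReal.ofReal (y ^ r) ^ 2 = ENNReal.ofReal (y ^ (2 * r)) := by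
    intro y hy r
    rw [← ENNReal.ofReal_pow (Real.rpow_nonneg (hx.trans hy).le _), ← Real.rpow_natCast,
      ← Real.rpow_mul (hx.trans hy).le, mul_comm]
    norm_num
  calc (∫⁻ y in Ioi x, H y) ^ 2
      = (∫⁻ y in Ioi x, ENNReal.ofReal (y ^ ((3 : ℝ) / 4)) * H y *
          ENNReal.ofReal (y ^ (-(3 : ℝ) / 4))) ^ 2 := by
        rw [setLIntegral_congr_fun measurableSet_Ioi hsplit]
    _ ≤ (∫⁻ y in Ioi x, (ENNReal.ofReal (y ^ ((3 : ℝ) / 4)) * H y) ^ 2) *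
          ∫⁻ y in Ioi x, ENNReal.ofReal (y ^ (-(3 : ℝ) / 4)) ^ 2 :=
        ENNReal.sq_lintegral_mul_le (by fun_prop) (by fun_prop)
    _ = (∫⁻ y in Ioi x, ENNReal.ofReal (y ^ ((3 : ℝ) / 2)) * H y ^ 2) *
          (2 * ENNReal.ofReal (x ^ (-(1 : ℝ) / 2))) := by
        congr 1
        · refine setLIntegral_congr_fun measurableSet_Ioi fun y hy => ?_
          rw [mul_pow, hsq y hy]
          norm_num
        · rw [setLIntegral_congr_fun measurableSet_Ioi fun y hy => hsq y hy _,
            lintegral_Ioi_ofReal_rpow (by norm_num) hx]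
          norm_num
          rw [div_eq_mul_inv, mul_comm, ENNReal.ofReal_mul (by norm_num)]
          norm_num
    _ = _ := mul_comm _ _

theorem lintegral_sq_lintegral_Ioi_le {H : ℝ → ℝ≥0∞} (hH : Measurable H) :
    ∫⁻ x in Ioi 0, (∫⁻ y in Ioi x, H y) ^ 2 ≤ 4 * ∫⁻ y in Ioi 0, (ENNReal.ofReal y * H y) ^ 2 := by
  set μ := volume.restrict (Ioi (0 : ℝ))
  have hIoi : ∀ x ∈ Ioi (0 : ℝ), μ.restrict (Ioi x) = volume.restrict (Ioi x) := fun x hx =>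
    Measure.restrict_restrict_of_subset (Ioi_subset_Ioi (le_of_lt hx))
  have hIio : ∀ y, μ.restrict (Iio y) = volume.restrict (Ioo 0 y) := fun y => by
    rw [Measure.restrict_restrict measurableSet_Iio, Iio_inter_Ioi]
  calc ∫⁻ x in Ioi 0, (∫⁻ y in Ioi x, H y) ^ 2
      ≤ ∫⁻ x, 2 * ENNReal.ofReal (x ^ (-(1 : ℝ) / 2)) *
          ∫⁻ y in Ioi x, ENNReal.ofReal (y ^ ((3 : ℝ) / 2)) * H y ^ 2 ∂μ ∂μ :=
        setLIntegral_mono' measurableSet_Ioi fun x hx => hIoi x hx ▸ sq_lintegral_Ioi_le hH hx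
    _ = ∫⁻ y, ENNReal.ofReal (y ^ ((3 : ℝ) / 2)) * H y ^ 2 *
          ∫⁻ x in Iio y, 2 * ENNReal.ofReal (x ^ (-(1 : ℝ) / 2)) ∂μ ∂μ :=
        lintegral_mul_lintegral_Ioi_comm μ (by fun_prop) (by fun_prop)
    _ = ∫⁻ y in Ioi 0, 4 * (ENNReal.ofReal y * H y) ^ 2 := by
        refine setLIntegral_congr_fun measurableSet_Ioi fun y (hy : 0 < y) => ?_
        rw [hIio, lintegral_const_mul _ (by fun_prop), lintegral_Ioo_ofReal_rpow (by norm_num) hy.le]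
        have hpow : y ^ ((3 : ℝ) / 2) * y ^ ((1 : ℝ) / 2) = y ^ 2 := by
          rw [← Real.rpow_add hy]; norm_num
        have hweight : ENNReal.ofReal (y ^ ((3 : ℝ) / 2)) *
            (2 * ENNReal.ofReal (y ^ (-(1 : ℝ) / 2 + 1) / (-(1 : ℝ) / 2 + 1))) =
            4 * ENNReal.ofReal y ^ 2 := by
          rw [← ENNReal.ofReal_pow hy.le, ← ENNReal.ofReal_ofNat 2, ← ENNReal.ofReal_ofNat 4,
            ← ENNReal.ofReal_mul (by norm_num), ← ENNReal.ofReal_mul (by positivity),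
            ← ENNReal.ofReal_mul (by norm_num)]
          congr 1
          norm_num
          linear_combination 4 * hpow
        rw [mul_right_comm, hweight]
        ring
    _ = 4 * ∫⁻ y in Ioi 0, (ENNReal.ofReal y * H y) ^ 2 := lintegral_const_mul _ (by fun_prop)

theorem eLpNorm_lintegral_Ioi_le {H : ℝ → ℝ≥0∞} (hH : Measurable H) :
    eLpNorm (fun x => ∫⁻ y in Ioi x, H y) 2 (volume.restrict (Ioi 0)) ≤
      2 * eLpNorm (fun y => ENNReal.ofReal y * H y) 2 (volume.restrict (Ioi 0)) := by
  rw [← ENNReal.pow_le_pow_left_iff two_ne_zero, mul_pow, eLpNorm_two_sq, eLpNorm_two_sq]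
  simpa only [enorm_eq_self, show (2 : ℝ≥0∞) ^ 2 = 4 by norm_num]
    using lintegral_sq_lintegral_Ioi_le hH

section TailIntegral

variable {E : Type*} [NormedAddCommGroup E] {f : ℝ → E}

theorem integral_Ioi_norm_ae_eq_toReal_lintegral {H : ℝ → ℝ≥0∞}
    (hf : AEStronglyMeasurable f (volume.restrict (Ioi 0)))
    (hfH : (fun y => ‖f y‖ₑ) =ᵐ[volume.restrict (Ioi 0)] H) :
    (fun x => ∫ y in Ioi x, ‖f y‖) =ᵐ[volume.restrict (Ioi 0)]
      fun x => (∫⁻ y in Ioi x, H y).toReal := by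
  refine (ae_restrict_iff' measurableSet_Ioi).2 (.of_forall fun x (hx : 0 < x) => ?_)
  have hsub : (volume.restrict (Ioi 0)).restrict (Ioi x) = volume.restrict (Ioi x) :=
    Measure.restrict_restrict_of_subset (Ioi_subset_Ioi hx.le)
  dsimp only
  rw [integral_norm_eq_lintegral_enorm (hsub ▸ hf.restrict), ← hsub,
    lintegral_congr_ae (ae_restrict_of_ae hfH)]

theorem aestronglyMeasurable_integral_Ioi_norm
    (hf : AEStronglyMeasurable f (volume.restrict (Ioi 0))) :
    AEStronglyMeasurable (fun x => ∫ y in Ioi x, ‖f y‖) (volume.restrict (Ioi 0)) := by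
  have hanti : Antitone fun x : ℝ => ∫⁻ y in Ioi x, hf.enorm.mk _ y :=
    fun a b hab => lintegral_mono_set (Ioi_subset_Ioi hab)
  exact (ENNReal.measurable_toReal.comp hanti.measurable).aestronglyMeasurable.congr
    (integral_Ioi_norm_ae_eq_toReal_lintegral hf hf.enorm.ae_eq_mk).symm

theorem eLpNorm_integral_Ioi_norm_le [NormedSpace ℝ E]
    (hf : AEStronglyMeasurable f (volume.restrict (Ioi 0))) :
    eLpNorm (fun x => ∫ y in Ioi x, ‖f y‖) 2 (volume.restrict (Ioi 0)) ≤
      2 * eLpNorm (fun y => y • f y) 2 (volume.restrict (Ioi 0)) := by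
  set H := hf.enorm.mk _
  have hfH : (fun y => ‖f y‖ₑ) =ᵐ[volume.restrict (Ioi 0)] H := hf.enorm.ae_eq_mk
  rw [eLpNorm_congr_ae (integral_Ioi_norm_ae_eq_toReal_lintegral hf hfH)]
  calc eLpNorm (fun x => (∫⁻ y in Ioi x, H y).toReal) 2 (volume.restrict (Ioi 0))
      ≤ eLpNorm (fun x => ∫⁻ y in Ioi x, H y) 2 (volume.restrict (Ioi 0)) :=
        eLpNorm_mono_enorm fun x => by
          rw [Real.enorm_eq_ofReal ENNReal.toReal_nonneg, enorm_eq_self]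
          exact ENNReal.ofReal_toReal_le
    _ ≤ 2 * eLpNorm (fun y => ENNReal.ofReal y * H y) 2 (volume.restrict (Ioi 0)) :=
        eLpNorm_lintegral_Ioi_le hf.enorm.measurable_mk
    _ = 2 * eLpNorm (fun y => y • f y) 2 (volume.restrict (Ioi 0)) := by
        refine congrArg (2 * ·) (eLpNorm_congr_enorm_ae ?_)
        filter_upwards [hfH, ae_restrict_mem measurableSet_Ioi] with y hy (hy0 : 0 < y)
        rw [enorm_smul, ← hy, Real.enorm_eq_ofReal hy0.le, enorm_eq_self]

end TailIntegral

theorem stmt_1 :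
    ∃ C > 0, ∀ f : ℝ → ℂ,
      MemLp (fun x => (1 + |x|) • f x) 2 (volume.restrict (Ioi (0:ℝ))) →
      MemLp (fun x => ∫ y in Ioi x, ‖f y‖) 2 (volume.restrict (Ioi (0:ℝ))) ∧
      eLpNorm (fun x => ∫ y in Ioi x, ‖f y‖) 2 (volume.restrict (Ioi (0:ℝ)))
        ≤ ENNReal.ofReal C *
          eLpNorm (fun x => (1 + |x|) • f x) 2 (volume.restrict (Ioi (0:ℝ))) := by
  refine ⟨2, two_pos, fun f hf => ?_⟩
  have hfm : AEStronglyMeasurable f (volume.restrict (Ioi 0)) := by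
    have hw : Continuous fun x : ℝ => (1 + |x|)⁻¹ :=
      (continuous_const.add continuous_abs).inv₀ fun x => (by positivity : (0 : ℝ) < 1 + |x|).ne'
    refine (hw.aestronglyMeasurable.smul hf.1).congr (.of_forall fun x => ?_)
    simp only [Pi.smul_apply', smul_smul, inv_mul_cancel₀ (by positivity : 1 + |x| ≠ 0), one_smul]
  have hbound : eLpNorm (fun x => ∫ y in Ioi x, ‖f y‖) 2 (volume.restrict (Ioi 0)) ≤
      ENNReal.ofReal 2 * eLpNorm (fun x => (1 + |x|) • f x) 2 (volume.restrict (Ioi 0)) := by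
    refine (eLpNorm_integral_Ioi_norm_le hfm).trans ?_
    rw [ENNReal.ofReal_ofNat]
    gcongr 2 * ?_
    refine eLpNorm_mono fun y => ?_
    rw [norm_smul, norm_smul, Real.norm_eq_abs, Real.norm_eq_abs,
      abs_of_nonneg (by positivity : (0 : ℝ) ≤ 1 + |y|)]
    gcongr
    linarith
  exact ⟨⟨aestronglyMeasurable_integral_Ioi_norm hfm,
    hbound.trans_lt (ENNReal.mul_lt_top ENNReal.ofReal_lt_top hf.2)⟩, hbound⟩
end

section
/- Let g : ℝ → ℂ be measurable and define f(z) = g(z - 1/z) for z ∈ (0,∞). Then ∫_0^∞ |f(z)|² dz = ∫_ℝ |g(γ)|² (1/2 + γ/(2√(γ²+4))) dγ; in particular ∫_0^∞ |f(z)|² dz ≤ ∫_ℝ |g(γ)|² dγ. -/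
open MeasureTheory Set
open scoped ENNReal NNReal

/-!
The map `z ↦ z - 1/z` is a smooth increasing bijection of `(0,∞)` onto `ℝ`, with inverse
`γ ↦ (γ + √(γ²+4))/2`, whose derivative `1/2 + γ/(2√(γ²+4))` lies in `[0,1]` since `|γ| < √(γ²+4)`.
Substituting `z` by this inverse is the one-dimensional change of variables, and the bound on the
Jacobian gives the inequality.
-/

noncomputable def subInvInverse (γ : ℝ) : ℝ := (γ + Real.sqrt (γ ^ 2 + 4)) / 2

lemma abs_lt_sqrt_sq_add_four (γ : ℝ) : |γ| < Real.sqrt (γ ^ 2 + 4) := by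
  rw [← Real.sqrt_sq_eq_abs]
  exact Real.sqrt_lt_sqrt (by positivity) (by linarith)

lemma subInvInverse_pos (γ : ℝ) : 0 < subInvInverse γ := by
  have := abs_lt_sqrt_sq_add_four γ
  have := neg_abs_le γ
  unfold subInvInverse
  linarith

lemma subInvInverse_sub_inv (γ : ℝ) : subInvInverse γ - 1 / subInvInverse γ = γ := by
  have hsq : Real.sqrt (γ ^ 2 + 4) ^ 2 = γ ^ 2 + 4 := Real.sq_sqrt (by positivity)
  have hinv : 1 / subInvInverse γ = (Real.sqrt (γ ^ 2 + 4) - γ) / 2 := by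
    rw [div_eq_div_iff (subInvInverse_pos γ).ne' two_ne_zero, subInvInverse]
    linear_combination -hsq / 2
  rw [hinv, subInvInverse]
  ring

lemma subInvInverse_injective : Function.Injective subInvInverse :=
  Function.LeftInverse.injective (g := fun z => z - 1 / z) subInvInverse_sub_inv

lemma subInvInverse_sub_inv_self {z : ℝ} (hz : 0 < z) : subInvInverse (z - 1 / z) = z := by
  have hsqrt : Real.sqrt ((z - 1 / z) ^ 2 + 4) = z + 1 / z := by
    rw [show (z - 1 / z) ^ 2 + 4 = (z + 1 / z) ^ 2 by field_simp; ring]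
    exact Real.sqrt_sq (by positivity)
  rw [subInvInverse, hsqrt]
  ring

lemma range_subInvInverse : range subInvInverse = Ioi 0 :=
  Subset.antisymm (range_subset_iff.2 subInvInverse_pos)
    fun _ hz => ⟨_, subInvInverse_sub_inv_self hz⟩

lemma hasDerivAt_subInvInverse (γ : ℝ) :
    HasDerivAt subInvInverse (1 / 2 + γ / (2 * Real.sqrt (γ ^ 2 + 4))) γ := by
  have hsq : HasDerivAt (fun γ : ℝ => γ ^ 2 + 4) (2 * γ) γ := by
    simpa using (hasDerivAt_pow 2 γ).add_const 4
  have hsqrt_ne : Real.sqrt (γ ^ 2 + 4) ≠ 0 := (Real.sqrt_pos.2 (by positivity)).ne'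
  refine (((hasDerivAt_id γ).add (hsq.sqrt (by positivity))).div_const 2).congr_deriv ?_
  field_simp

lemma abs_div_two_sqrt_sq_add_four_le (γ : ℝ) : |γ / (2 * Real.sqrt (γ ^ 2 + 4))| ≤ 1 / 2 := by
  have hlt := abs_lt_sqrt_sq_add_four γ
  have hpos : 0 < 2 * Real.sqrt (γ ^ 2 + 4) := by linarith [abs_nonneg γ]
  rw [abs_div, abs_of_pos hpos, div_le_iff₀ hpos]
  linarith

lemma lintegral_Ioi_eq_lintegral_subInvInverse (u : ℝ → ℝ≥0∞) :
    ∫⁻ z in Ioi 0, u z =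
      ∫⁻ γ, ENNReal.ofReal (1 / 2 + γ / (2 * Real.sqrt (γ ^ 2 + 4))) * u (subInvInverse γ) := by
  have hderiv_nonneg (γ : ℝ) : 0 ≤ 1 / 2 + γ / (2 * Real.sqrt (γ ^ 2 + 4)) := by
    linarith [neg_abs_le (γ / (2 * Real.sqrt (γ ^ 2 + 4))), abs_div_two_sqrt_sq_add_four_le γ]
  rw [← range_subInvInverse, ← image_univ, lintegral_image_eq_lintegral_abs_deriv_mul
    MeasurableSet.univ (fun γ _ => (hasDerivAt_subInvInverse γ).hasDerivWithinAt)
    subInvInverse_injective.injOn, Measure.restrict_univ]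
  simp_rw [abs_of_nonneg (hderiv_nonneg _)]

theorem stmt_5_general (g : ℝ → ℂ) (f : ℝ → ℂ)
    (hf : ∀ z : ℝ, f z = g (z - 1/z)) :
    (∫⁻ z in Ioi (0:ℝ), (‖f z‖₊ : ℝ≥0∞) ^ 2) =
      (∫⁻ γ : ℝ, (‖g γ‖₊ : ℝ≥0∞) ^ 2 *
        ENNReal.ofReal (1/2 + γ / (2 * Real.sqrt (γ^2 + 4)))) ∧
    (∫⁻ z in Ioi (0:ℝ), (‖f z‖₊ : ℝ≥0∞) ^ 2) ≤ ∫⁻ γ : ℝ, (‖g γ‖₊ : ℝ≥0∞) ^ 2 := by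
  have hchange : (∫⁻ z in Ioi (0:ℝ), (‖f z‖₊ : ℝ≥0∞) ^ 2) =
      ∫⁻ γ : ℝ, (‖g γ‖₊ : ℝ≥0∞) ^ 2 *
        ENNReal.ofReal (1/2 + γ / (2 * Real.sqrt (γ^2 + 4))) := by
    simp_rw [lintegral_Ioi_eq_lintegral_subInvInverse, hf, subInvInverse_sub_inv, mul_comm]
  refine ⟨hchange, hchange ▸ lintegral_mono fun γ => mul_le_of_le_one_right' ?_⟩
  refine ENNReal.ofReal_le_one.2 ?_
  linarith [le_abs_self (γ / (2 * Real.sqrt (γ ^ 2 + 4))), abs_div_two_sqrt_sq_add_four_le γ]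

/-- Change of variables `γ = z - 1/z` on `(0,∞)`:
`∫_0^∞ |g(z-1/z)|² dz = ∫_ℝ |g(γ)|² (1/2 + γ/(2√(γ²+4))) dγ ≤ ∫_ℝ |g(γ)|² dγ`. -/
theorem stmt_5 (g : ℝ → ℂ) (hg : Measurable g) (f : ℝ → ℂ)
    (hf : ∀ z : ℝ, f z = g (z - 1/z)) :
    (∫⁻ z in Ioi (0:ℝ), (‖f z‖₊ : ℝ≥0∞) ^ 2) =
      (∫⁻ γ : ℝ, (‖g γ‖₊ : ℝ≥0∞) ^ 2 *
        ENNReal.ofReal (1/2 + γ / (2 * Real.sqrt (γ^2 + 4)))) ∧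
    (∫⁻ z in Ioi (0:ℝ), (‖f z‖₊ : ℝ≥0∞) ^ 2) ≤ ∫⁻ γ : ℝ, (‖g γ‖₊ : ℝ≥0∞) ^ 2 :=
  stmt_5_general g f hf
end
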